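/- Let θ ∈ (0, 1/4), let 0 < ε < 1/6, let C₀ > 0, and let H, h : (0,1] → [0,∞) be continuous functions. Assume that for every r ∈ [ε, 1/3]: (i) H(t) ≤ C₀ H(3r) for every t ∈ [r, 3r]; (ii) |h(t) − h(s)| ≤ C₀ H(3r) for every t, s ∈ [r, 3r]; and (iii) H(θr) ≤ (1/2) H(r) + C₀ (ε/r)^{1/2} ( H(3r) + h(3r) ). Then there exists a constant C depending only on C₀ and θ (in particular, independent of ε, H and h) such that max_{r ∈ [ε,1]} ( H(r) + h(r) ) ≤ C ( H(1) + h(1) ). -/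

import Mathlib

/-!
Along the geometric scales `θⁿ` the quantity `Vₙ = μ H(θⁿ) + h(θⁿ)` satisfies
`Vₙ₊₂ ≤ Vₙ₊₁ + bₙ₊₁ Vₙ` with `bₙ = μ C₀ (ε/θⁿ)^{1/2}`: the decay inequality halves `H`, the
comparison hypotheses move `H` and `h` between nearby scales at a cost depending only on `C₀`
and `θ`, and the factor `1/2` absorbs the oscillation of `h`. Since `θ < 1/4`, the `bₙ` at least
double at each step, so `∏ (1 + bₖ) ≤ exp (2 bₙ)`, which stays bounded while `θⁿ ≥ ε`. Every
`r ∈ [ε, 1]` lies within a bounded number of triadic steps below some such `θⁿ`.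
-/

open Set Real

theorem two_mul_sqrt_div_pow_le {ε θ : ℝ} (hε : 0 ≤ ε) (hθ : 0 < θ) (hθ' : θ ≤ 1 / 4) (n : ℕ) :
    2 * √(ε / θ ^ n) ≤ √(ε / θ ^ (n + 1)) := by
  have hx : 0 ≤ ε / θ ^ n := by positivity
  rw [show (2 : ℝ) = √4 by rw [show (4 : ℝ) = 2 ^ 2 by norm_num, sqrt_sq zero_le_two],
    ← sqrt_mul zero_le_four, pow_succ, ← div_div]
  exact sqrt_le_sqrt ((le_div_iff₀ hθ).2 (by nlinarith))

theorem max_le_exp_mul_of_le_add_mul {V b : ℕ → ℝ} {N : ℕ} (hV : ∀ n, 0 ≤ V n)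
    (hb : ∀ n, 0 ≤ b n) (hb₂ : ∀ n, 2 * b n ≤ b (n + 1))
    (hrec : ∀ n, n + 2 ≤ N → V (n + 2) ≤ V (n + 1) + b (n + 1) * V n) :
    ∀ n, n + 1 ≤ N → max (V (n + 1)) (V n) ≤ exp (2 * b n) * max (V 1) (V 0) := by
  intro n
  induction n with
  | zero =>
    intro _
    exact le_mul_of_one_le_left ((hV 0).trans (le_max_right _ _)) (one_le_exp (by linarith [hb 0]))
  | succ n ih =>
    intro hn
    set W := max (V (n + 1)) (V n)
    have hW : 0 ≤ W := (hV n).trans (le_max_right _ _)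
    have hstep : max (V (n + 2)) (V (n + 1)) ≤ (1 + b (n + 1)) * W := by
      have := hrec n hn
      have := mul_le_mul_of_nonneg_left (le_max_right (V (n + 1)) (V n)) (hb (n + 1))
      have := le_max_left (V (n + 1)) (V n)
      have := mul_nonneg (hb (n + 1)) hW
      exact max_le (by nlinarith) (by nlinarith)
    calc max (V (n + 2)) (V (n + 1)) ≤ (1 + b (n + 1)) * W := hstep
      _ ≤ exp (b (n + 1)) * (exp (2 * b n) * max (V 1) (V 0)) := by
        gcongr
        · linarith [add_one_le_exp (b (n + 1))]
        · exact ih (by omega)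
      _ = exp (b (n + 1) + 2 * b n) * max (V 1) (V 0) := by rw [exp_add, mul_assoc]
      _ ≤ exp (2 * b (n + 1)) * max (V 1) (V 0) := by
        gcongr
        · exact (hV 0).trans (le_max_right _ _)
        · linarith [hb₂ n]

def scaleEnergy (μ θ : ℝ) (H h : ℝ → ℝ) (n : ℕ) : ℝ := μ * H (θ ^ n) + h (θ ^ n)

section scaleEnergy

variable {μ θ : ℝ} {H h : ℝ → ℝ}

theorem scaleEnergy_nonneg (hμ : 0 ≤ μ) (hθ : 0 < θ) (hθ₁ : θ ≤ 1)
    (hH₀ : ∀ r ∈ Ioc 0 1, 0 ≤ H r) (hh₀ : ∀ r ∈ Ioc 0 1, 0 ≤ h r) (n : ℕ) :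
    0 ≤ scaleEnergy μ θ H h n := by
  have hθn : θ ^ n ∈ Ioc 0 1 := ⟨pow_pos hθ n, pow_le_one₀ hθ.le hθ₁⟩
  exact add_nonneg (mul_nonneg hμ (hH₀ _ hθn)) (hh₀ _ hθn)

theorem scaleEnergy_zero_le {A : ℝ} (hA : 0 ≤ A) (hμ : 1 ≤ μ) (hH1 : 0 ≤ H 1) (hh1 : 0 ≤ h 1) :
    scaleEnergy μ θ H h 0 ≤ μ * (A + 1) * (H 1 + h 1) := by
  have := mul_nonneg (mul_nonneg (by linarith : 0 ≤ μ) hA) hH1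
  have := mul_nonneg (by nlinarith : 0 ≤ μ * (A + 1) - 1) hh1
  simp only [scaleEnergy, pow_zero]
  nlinarith

end scaleEnergy

structure TriadicControl (ε C : ℝ) (H h : ℝ → ℝ) : Prop where
  H_le : ∀ r ∈ Icc ε (1 / 3), ∀ t ∈ Icc r (3 * r), H t ≤ C * H (3 * r)
  abs_h_sub_le : ∀ r ∈ Icc ε (1 / 3), ∀ t ∈ Icc r (3 * r), ∀ s ∈ Icc r (3 * r),
    |h t - h s| ≤ C * H (3 * r)

namespace TriadicControl

variable {ε C θ μ : ℝ} {H h : ℝ → ℝ} {K : ℕ}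

theorem add_abs_sub_le (hT : TriadicControl ε C H h) {a b : ℝ} (hab : a ≤ b)
    (hb : b ≤ 3 * a) (hb₁ : b ≤ 1) (hεb : 3 * ε ≤ b) :
    H a + |h a - h b| ≤ 2 * C * H b := by
  have hr : b / 3 ∈ Icc ε (1 / 3) := ⟨by linarith, by linarith⟩
  have hH := hT.H_le (b / 3) hr a ⟨by linarith, by linarith⟩
  have hh := hT.abs_h_sub_le (b / 3) hr a ⟨by linarith, by linarith⟩ b ⟨by linarith, by linarith⟩
  rw [mul_div_cancel₀ b three_ne_zero] at hH hh
  linarith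

theorem add_abs_sub_le_pow (hT : TriadicControl ε C H h) (hC : 0 ≤ C) (hε : 0 < ε)
    (hH₀ : ∀ r ∈ Ioc 0 1, 0 ≤ H r) (m : ℕ) {a b : ℝ} (ha : ε ≤ a) (hab : a ≤ b)
    (hb₁ : b ≤ 1) (hεb : 3 * ε ≤ b) (hb : b ≤ 3 ^ m * a) :
    H a + |h a - h b| ≤ (2 * C + 1) ^ m * H b := by
  induction m generalizing a with
  | zero =>
    obtain rfl : a = b := le_antisymm hab (by simpa using hb)
    simp
  | succ m ih =>
    have hL : 1 ≤ (2 * C + 1) ^ m := one_le_pow₀ (by linarith)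
    rcases le_or_gt b (3 * a) with hb3 | hb3
    · have hHb : 0 ≤ H b := hH₀ b ⟨by linarith, hb₁⟩
      calc H a + |h a - h b| ≤ 2 * C * H b := hT.add_abs_sub_le hab hb3 hb₁ hεb
        _ ≤ (2 * C + 1) ^ m * (2 * C + 1) * H b := by
            apply mul_le_mul_of_nonneg_right _ hHb; nlinarith
        _ = (2 * C + 1) ^ (m + 1) * H b := by rw [pow_succ]
    · have hH3a : 0 ≤ H (3 * a) := hH₀ (3 * a) ⟨by linarith, by linarith⟩
      have hstep := hT.add_abs_sub_le (a := a) (by linarith) le_rfl (by linarith) (by linarith)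
      have hrest := ih (a := 3 * a) (by linarith) hb3.le (by rw [pow_succ] at hb; linarith)
      have htri := abs_sub_le (h a) (h (3 * a)) (h b)
      have habs := abs_nonneg (h (3 * a) - h b)
      calc H a + |h a - h b| ≤ 2 * C * H (3 * a) + |h (3 * a) - h b| := by linarith
        _ ≤ (2 * C + 1) * (H (3 * a) + |h (3 * a) - h b|) := by nlinarith
        _ ≤ (2 * C + 1) * ((2 * C + 1) ^ m * H b) := by gcongr
        _ = (2 * C + 1) ^ (m + 1) * H b := by ring

theorem scaleEnergy_add_two_le (hT : TriadicControl ε C H h) (hC : 0 ≤ C) (hε : 0 < ε)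
    (hH₀ : ∀ r ∈ Ioc 0 1, 0 ≤ H r) (hθ : 0 < θ) (hθ' : θ < 1 / 4) (hK : 3 ≤ 3 ^ K * θ)
    (hμ : 2 * (2 * C + 1) ^ K ≤ μ)
    (hdecay : ∀ r ∈ Icc ε (1 / 3),
      H (θ * r) ≤ (1 / 2) * H r + C * √(ε / r) * (H (3 * r) + h (3 * r)))
    {n : ℕ} (hn : ε ≤ θ ^ (n + 2)) :
    scaleEnergy μ θ H h (n + 2) ≤
      scaleEnergy μ θ H h (n + 1) + μ * C * √(ε / θ ^ (n + 1)) * scaleEnergy μ θ H h n := by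
  set p := θ ^ n
  have hp : 0 < p := pow_pos hθ n
  have hp₁ : p ≤ 1 := pow_le_one₀ hθ.le (by linarith)
  have hθp : θ ^ (n + 1) = θ * p := pow_succ' θ n
  have hθθp : θ ^ (n + 2) = θ * (θ * p) := by rw [pow_succ', hθp]
  rw [hθθp] at hn
  simp only [scaleEnergy, hθθp, hθp]
  have h3K : 0 < (3 : ℝ) ^ K := by positivity
  have hA : 1 ≤ (2 * C + 1) ^ K := one_le_pow₀ (by linarith)
  have hθp_pos : 0 < θ * p := by positivity
  have hθp_le : θ * p ≤ p / 4 := by nlinarith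
  have hθθp_le : θ * (θ * p) ≤ θ * p / 4 := by nlinarith
  have hdec := hdecay (θ * p) ⟨by linarith, by linarith⟩
  have hcoarse := hT.add_abs_sub_le_pow hC hε hH₀ K (a := 3 * (θ * p)) (b := p)
    (by linarith) (by linarith) hp₁ (by linarith) (by nlinarith)
  have hfine := hT.add_abs_sub_le_pow hC hε hH₀ K (a := θ * (θ * p)) (b := θ * p)
    hn (by linarith) (by linarith) (by linarith) (by nlinarith)
  have hHp : 0 ≤ H p := hH₀ p ⟨hp, hp₁⟩
  have hHθp : 0 ≤ H (θ * p) := hH₀ _ ⟨hθp_pos, by linarith⟩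
  have hHθθp : 0 ≤ H (θ * (θ * p)) := hH₀ _ ⟨by positivity, by linarith⟩
  have hcoarse' : H (3 * (θ * p)) + h (3 * (θ * p)) ≤ μ * H p + h p := by
    have := le_abs_self (h (3 * (θ * p)) - h p)
    nlinarith
  have hfine' : h (θ * (θ * p)) ≤ h (θ * p) + (2 * C + 1) ^ K * H (θ * p) := by
    have := le_abs_self (h (θ * (θ * p)) - h (θ * p))
    linarith
  have hs : 0 ≤ μ * C * √(ε / (θ * p)) := by
    have : 0 ≤ μ := by linarith
    positivity
  have := mul_le_mul_of_nonneg_left hcoarse' hs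
  have := mul_le_mul_of_nonneg_left hdec (by linarith : 0 ≤ μ)
  nlinarith

theorem max_scaleEnergy_one_zero_le (hT : TriadicControl ε C H h) (hC : 0 ≤ C) (hε : 0 < ε)
    (hε₃ : 3 * ε ≤ 1) (hH₀ : ∀ r ∈ Ioc 0 1, 0 ≤ H r) (hh₀ : ∀ r ∈ Ioc 0 1, 0 ≤ h r)
    (hθ : θ ≤ 1) (hK : 1 ≤ 3 ^ K * θ) (hμ : 2 * (2 * C + 1) ^ K ≤ μ) (hεθ : ε ≤ θ) :
    max (scaleEnergy μ θ H h 1) (scaleEnergy μ θ H h 0) ≤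
      μ * ((2 * C + 1) ^ K + 1) * (H 1 + h 1) := by
  have hchain := hT.add_abs_sub_le_pow hC hε hH₀ K hεθ hθ le_rfl hε₃ (by linarith)
  set A := (2 * C + 1) ^ K
  have hA : 1 ≤ A := one_le_pow₀ (by linarith)
  have hH1 : 0 ≤ H 1 := hH₀ 1 ⟨one_pos, le_rfl⟩
  have hh1 : 0 ≤ h 1 := hh₀ 1 ⟨one_pos, le_rfl⟩
  have hHθ : 0 ≤ H θ := hH₀ θ ⟨by linarith, hθ⟩
  refine max_le ?_ (scaleEnergy_zero_le (by linarith) (by linarith) hH1 hh1)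
  have := le_abs_self (h θ - h 1)
  have := abs_nonneg (h θ - h 1)
  have := mul_le_mul_of_nonneg_left (by linarith : H θ ≤ A * H 1) (by linarith : 0 ≤ μ)
  have := mul_le_mul_of_nonneg_right (by linarith : A ≤ μ) hH1
  have := mul_nonneg (by nlinarith : 0 ≤ μ * (A + 1) - 1) hh1
  simp only [scaleEnergy, pow_one]
  nlinarith

theorem scaleEnergy_le (hT : TriadicControl ε C H h) (hC : 0 ≤ C) (hε : 0 < ε)
    (hε₃ : 3 * ε ≤ 1) (hH₀ : ∀ r ∈ Ioc 0 1, 0 ≤ H r) (hh₀ : ∀ r ∈ Ioc 0 1, 0 ≤ h r)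
    (hθ : 0 < θ) (hθ' : θ < 1 / 4) (hK : 3 ≤ 3 ^ K * θ) (hμ : 2 * (2 * C + 1) ^ K ≤ μ)
    (hdecay : ∀ r ∈ Icc ε (1 / 3),
      H (θ * r) ≤ (1 / 2) * H r + C * √(ε / r) * (H (3 * r) + h (3 * r)))
    {m : ℕ} (hm : ε ≤ θ ^ m) :
    scaleEnergy μ θ H h m ≤ exp (2 * μ * C) * (μ * ((2 * C + 1) ^ K + 1)) * (H 1 + h 1) := by
  have hA : 1 ≤ (2 * C + 1) ^ K := one_le_pow₀ (by linarith)
  have hH1 : 0 ≤ H 1 := hH₀ 1 ⟨one_pos, le_rfl⟩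
  have hh1 : 0 ≤ h 1 := hh₀ 1 ⟨one_pos, le_rfl⟩
  have hV := scaleEnergy_nonneg (by linarith) hθ (by linarith) hH₀ hh₀ (μ := μ)
  have hμC : 0 ≤ μ * C := mul_nonneg (by linarith) hC
  set b : ℕ → ℝ := fun n => μ * C * √(ε / θ ^ n)
  rcases m with _ | n
  · calc scaleEnergy μ θ H h 0 ≤ μ * ((2 * C + 1) ^ K + 1) * (H 1 + h 1) :=
          scaleEnergy_zero_le (by linarith) (by linarith) hH1 hh1
      _ ≤ exp (2 * μ * C) * (μ * ((2 * C + 1) ^ K + 1)) * (H 1 + h 1) := by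
          rw [mul_assoc (exp _)]
          refine le_mul_of_one_le_left ?_ (one_le_exp (by linarith))
          exact mul_nonneg (mul_nonneg (by linarith) (by linarith)) (add_nonneg hH1 hh1)
  · have hb₂ : ∀ k, 2 * b k ≤ b (k + 1) := fun k => by
      have := two_mul_sqrt_div_pow_le hε.le hθ hθ'.le k
      simp only [b]
      nlinarith
    have hrec : ∀ k, k + 2 ≤ n + 1 → scaleEnergy μ θ H h (k + 2) ≤
        scaleEnergy μ θ H h (k + 1) + b (k + 1) * scaleEnergy μ θ H h k := fun k hk =>
      hT.scaleEnergy_add_two_le hC hε hH₀ hθ hθ' hK hμ hdecay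
        (hm.trans (pow_le_pow_of_le_one hθ.le (by linarith) (by omega)))
    have hiter := max_le_exp_mul_of_le_add_mul hV (fun k => by positivity) hb₂ hrec n le_rfl
    have hθn : θ ^ (n + 1) ≤ θ ^ n := pow_le_pow_of_le_one hθ.le (by linarith) n.le_succ
    have hb : b n ≤ μ * C := by
      have : √(ε / θ ^ n) ≤ 1 := sqrt_le_one.2 ((div_le_one (pow_pos hθ n)).2 (by linarith))
      nlinarith
    have hθ₁ : θ ^ (n + 1) ≤ θ := pow_le_of_le_one hθ.le (by linarith) n.succ_ne_zero
    calc scaleEnergy μ θ H h (n + 1)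
        ≤ exp (2 * b n) * max (scaleEnergy μ θ H h 1) (scaleEnergy μ θ H h 0) :=
          (le_max_left _ _).trans hiter
      _ ≤ exp (2 * μ * C) * (μ * ((2 * C + 1) ^ K + 1) * (H 1 + h 1)) := by
          refine mul_le_mul (exp_le_exp.2 (by linarith)) ?_ ((hV 0).trans (le_max_right _ _))
            (exp_nonneg _)
          exact hT.max_scaleEnergy_one_zero_le hC hε hε₃ hH₀ hh₀ (by linarith) (by linarith)
            hμ (by linarith)
      _ = _ := by ring

theorem exists_add_le_scaleEnergy (hT : TriadicControl ε C H h) (hC : 0 ≤ C) (hε : 0 < ε)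
    (hε₃ : 3 * ε ≤ 1) (hH₀ : ∀ r ∈ Ioc 0 1, 0 ≤ H r) (hθ : 0 < θ) (hθ₁ : θ < 1)
    (hK : 3 ≤ 3 ^ K * θ) (hμ : (2 * C + 1) ^ K ≤ μ) {r : ℝ} (hr : r ∈ Icc ε 1) :
    ∃ m : ℕ, ε ≤ θ ^ m ∧ H r + h r ≤ scaleEnergy μ θ H h m := by
  obtain ⟨m, hlt, hle⟩ := exists_nat_pow_near_of_lt_one (x := max r (3 * ε))
    (lt_max_of_lt_right (by linarith)) (max_le hr.2 hε₃) hθ hθ₁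
  have hr_le := (le_max_left r (3 * ε)).trans hle
  have hε_le := (le_max_right r (3 * ε)).trans hle
  have hmax_le : max r (3 * ε) ≤ 3 * r := max_le (by linarith [hr.1]) (by linarith [hr.1])
  have hθm : θ ^ m ∈ Ioc 0 1 := ⟨pow_pos hθ m, pow_le_one₀ hθ.le hθ₁.le⟩
  have hratio : θ ^ m ≤ 3 ^ K * r := by
    rw [pow_succ'] at hlt
    have : 0 < (3 : ℝ) ^ K := by positivity
    nlinarith [hθm.1]
  have hchain := hT.add_abs_sub_le_pow hC hε hH₀ K hr.1 hr_le hθm.2 hε_le hratio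
  have := hH₀ _ hθm
  have := le_abs_self (h r - h (θ ^ m))
  refine ⟨m, by linarith, ?_⟩
  unfold scaleEnergy
  nlinarith [hH₀ r ⟨by linarith [hr.1], hr.2⟩]

end TriadicControl

/-- **Iteration lemma** (Shen): if `H, h : (0,1] → [0,∞)` are continuous, `H` is doubling-type
comparable on triples of scales, `h` has oscillation controlled by `H`, and `H` satisfies the
excess-decay inequality
`H(θr) ≤ (1/2) H(r) + C₀ (ε/r)^{1/2} (H(3r) + h(3r))` for `r ∈ [ε, 1/3]`,
then `max_{r ∈ [ε,1]} (H(r) + h(r)) ≤ C (H(1) + h(1))` with `C` depending only on `C₀` and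
`θ` (independent of `ε`, `H` and `h`). -/
theorem iteration_lemma
    (θ C₀ : ℝ) (hθ : 0 < θ) (hθ' : θ < 1 / 4) (hC₀ : 0 < C₀) :
    ∃ C : ℝ, 0 < C ∧
      ∀ ε : ℝ, 0 < ε → ε < 1 / 6 →
      ∀ H h : ℝ → ℝ,
        ContinuousOn H (Ioc 0 1) →
        ContinuousOn h (Ioc 0 1) →
        (∀ r ∈ Ioc (0 : ℝ) 1, 0 ≤ H r) →
        (∀ r ∈ Ioc (0 : ℝ) 1, 0 ≤ h r) →
        (∀ r ∈ Icc ε (1 / 3), ∀ t ∈ Icc r (3 * r), H t ≤ C₀ * H (3 * r)) →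
        (∀ r ∈ Icc ε (1 / 3), ∀ t ∈ Icc r (3 * r), ∀ s ∈ Icc r (3 * r),
            |h t - h s| ≤ C₀ * H (3 * r)) →
        (∀ r ∈ Icc ε (1 / 3),
            H (θ * r) ≤ (1 / 2) * H r + C₀ * Real.sqrt (ε / r) * (H (3 * r) + h (3 * r))) →
        ∀ r ∈ Icc ε 1, H r + h r ≤ C * (H 1 + h 1) := by
  obtain ⟨K, hK⟩ : ∃ K : ℕ, 3 / θ < 3 ^ K := pow_unbounded_of_one_lt _ (by norm_num)
  have hK' : 3 ≤ 3 ^ K * θ := ((div_lt_iff₀ hθ).1 hK).le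
  have hA : 1 ≤ (2 * C₀ + 1) ^ K := one_le_pow₀ (by linarith)
  set μ := 2 * (2 * C₀ + 1) ^ K
  refine ⟨exp (2 * μ * C₀) * (μ * ((2 * C₀ + 1) ^ K + 1)), by positivity, ?_⟩
  intro ε hε hε₆ H h _ _ hH₀ hh₀ hH hh hdecay r hr
  have hT : TriadicControl ε C₀ H h := ⟨hH, hh⟩
  obtain ⟨m, hm, hrm⟩ := hT.exists_add_le_scaleEnergy (μ := μ) hC₀.le hε (by linarith) hH₀ hθ
    (by linarith) hK' (by linarith) hr
  exact hrm.trans (hT.scaleEnergy_le hC₀.le hε (by linarith) hH₀ hh₀ hθ hθ' hK' le_rfl hdecay hm)
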